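/- arXiv:math/9805128 — 3 statements merged into one kernel-verified Lean document; each statement's English description precedes it below -/
import Mathlib

section
/- For n ≥ 2 and a simple matroid M_0 with a fixed non-loop element ε_0, the Tutte polynomial of the parallel connection P(C_n, M_0) along ε_0 satisfies T_{P(C_n,M_0)}(x,y) = (Σ_{i=0}^{n-2} x^i) · T_{M_0}(x,y) + y · T_{M_0/ε_0}(x,y). -/
/-!
A set `I` is independent in a parallel connection iff both traces `I ∩ E(Mᵢ)` are independent
and adding `ε₀` to one of them keeps it independent. With `M₁ = C_n` and `K = E(C_n) \ {ε₀}`, so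
`|K| = n - 1`, this says that `S ∪ B` with `S ⊆ K` and `B ⊆ E(M₀)` is independent in `P` iff
`B` is independent in `M₀` and, when `S = K`, moreover `ε₀ ∉ B` and `B ∪ {ε₀}` is independent
in `M₀`. Hence `r_P(S ∪ B) = |S| + r₀(B)` for `S ⊊ K`, while
`r_P(K ∪ B) = |K| - 1 + r₀(B ∪ {ε₀})`. In the corank–nullity expansion of `T_P`, the terms with
`S ⊊ K` are `(x - 1) ^ (|K| - 1 - |S|)` times the terms of `T_{M₀}`, and these powers sum to
`1 + x + ⋯ + x ^ (n - 2)`. The terms with `S = K` come in pairs `B`, `B ∪ {ε₀}` with `ε₀ ∉ B`,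
which have the same rank and differ by one in nullity, so each pair sums to `y` times the term
of `B` in `T_{M₀/ε₀}`.
-/

open MvPolynomial Classical
open scoped Matroid

variable {α β : Type*}

/-- The rank of a set in a matroid: the largest cardinality of an independent subset. -/
noncomputable def Matroid.mrank (M : Matroid α) (X : Set α) : ℕ :=
  sSup {n | ∃ I, M.Indep I ∧ I ⊆ X ∧ I.ncard = n}

/-- The Tutte polynomial (corank–nullity sum) of a matroid on a finite type,
as a polynomial in two variables `X 0` and `X 1`. -/
noncomputable def Matroid.tutte [Fintype α] (M : Matroid α) : MvPolynomial (Fin 2) ℤ :=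
  ∑ A ∈ Finset.univ.filter (fun A : Finset α => (A : Set α) ⊆ M.E),
    (X 0 - 1) ^ (M.mrank M.E - M.mrank (A : Set α)) *
      (X 1 - 1) ^ (A.card - M.mrank (A : Set α))

/-- A circuit: a minimal dependent subset of the ground set. -/
def Matroid.IsCircuit' (M : Matroid α) (C : Set α) : Prop :=
  C ⊆ M.E ∧ ¬ M.Indep C ∧ ∀ D ⊂ C, M.Indep D

/-- Deletion of a set of elements. -/
def Matroid.del (M : Matroid α) (D : Set α) : Matroid α := M ↾ (M.E \ D)

/-- Contraction of a set of elements, via the dual. -/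
def Matroid.con (M : Matroid α) (C : Set α) : Matroid α := (M✶ ↾ (M✶.E \ C))✶

/-- A coloop (isthmus): an element of every base. -/
def Matroid.IsColoop' (M : Matroid α) (e : α) : Prop := ∀ B, M.IsBase B → e ∈ B

/-- A simple matroid: every set of at most two elements of the ground set is independent. -/
def Matroid.IsSimple (M : Matroid α) : Prop := ∀ X ⊆ M.E, X.ncard ≤ 2 → M.Indep X

/-- A connected matroid: any two distinct elements lie on a common circuit. -/
def Matroid.IsConnected (M : Matroid α) : Prop :=
  M.E.Nonempty ∧ ∀ e ∈ M.E, ∀ f ∈ M.E, e = f ∨ ∃ C, M.IsCircuit' C ∧ e ∈ C ∧ f ∈ C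


namespace Finset

lemma sum_powerset_union_of_disjoint {ι M : Type*} [DecidableEq ι] [AddCommMonoid M]
    {s t : Finset ι} (hst : Disjoint s t) (f : Finset ι → M) :
    ∑ A ∈ (s ∪ t).powerset, f A = ∑ u ∈ s.powerset, ∑ v ∈ t.powerset, f (u ∪ v) := by
  rw [← sum_product', powerset_union]
  change ∑ A ∈ image₂ (· ∪ ·) _ _, f A = _
  rw [← image_uncurry_product, sum_image]
  · rfl
  rintro ⟨u, v⟩ huv ⟨u', v'⟩ huv' h
  simp only [coe_product, Set.mem_prod, mem_coe, mem_powerset] at huv huv'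
  have hst' := disjoint_left.1 hst
  have key : ∀ {u v : Finset ι}, u ⊆ s → v ⊆ t → (u ∪ v) ∩ s = u ∧ (u ∪ v) ∩ t = v := by
    intro u v hu hv
    constructor <;> ext x <;> grind
  simp only [Function.uncurry_apply_pair] at h
  obtain ⟨hu, hv⟩ := key huv.1 huv.2
  obtain ⟨hu', hv'⟩ := key huv'.1 huv'.2
  rw [h] at hu hv
  exact Prod.ext (hu.symm.trans hu') (hv.symm.trans hv')

/-- Multiplied by `x - 1`, both sides become `x ^ #s - 1`. -/
lemma sum_powerset_erase_self_sub_one_pow {ι R : Type*} [DecidableEq ι] [CommRing R] [IsDomain R]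
    {x : R} (hx : x ≠ 1) (s : Finset ι) :
    ∑ A ∈ s.powerset.erase s, (x - 1) ^ (#s - 1 - #A) = ∑ i ∈ range #s, x ^ i := by
  refine mul_left_cancel₀ (sub_ne_zero.2 hx) ?_
  have hsum := sum_pow_mul_eq_add_pow 1 (x - 1) s
  rw [← sum_erase_add _ _ (mem_powerset_self s)] at hsum
  simp only [one_pow, one_mul, Nat.sub_self, pow_zero, add_sub_cancel] at hsum
  rw [mul_comm (x - 1) (∑ i ∈ range _, _), geom_sum_mul, ← hsum, add_sub_cancel_right, mul_sum]
  refine sum_congr rfl fun A hA => ?_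
  have hlt : #A < #s := card_lt_card <| ssubset_iff_subset_ne.2
    ⟨mem_powerset.1 (mem_of_mem_erase hA), ne_of_mem_erase hA⟩
  rw [← pow_succ']
  congr 1
  omega

end Finset

namespace Matroid

section

variable {M : Matroid α} {C I X Y : Set α} {e : α}

lemma isCircuit'_iff : M.IsCircuit' C ↔ M.IsCircuit C := by
  rw [isCircuit_iff_forall_ssubset, Dep, IsCircuit']
  tauto

lemma con_eq_contract (M : Matroid α) (C : Set α) : M.con C = M ／ C := rfl

lemma Indep.exists_isCircuit_of_not_indep_insert (hI : M.Indep I) (he : e ∈ M.E)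
    (hIe : ¬ M.Indep (insert e I)) : ∃ C ⊆ insert e I, M.IsCircuit C ∧ e ∈ C := by
  have heI : e ∉ I := fun heI => hIe (by rwa [Set.insert_eq_of_mem heI])
  rw [hI.insert_indep_iff_of_notMem heI, Set.mem_sdiff, not_and, not_not] at hIe
  exact exists_isCircuit_of_mem_closure (hIe he) heI

lemma indep_iff_ssubset_ground_of_isCircuit_iff (hM : ∀ C, M.IsCircuit C ↔ C = M.E) :
    M.Indep I ↔ I ⊂ M.E := by
  simp only [indep_iff_forall_subset_not_isCircuit', hM, Set.ssubset_def, and_comm]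
  exact and_congr_right fun _ => ⟨fun h hEI => h _ hEI rfl, fun h C hCI hC => h (hC ▸ hCI)⟩

variable [_root_.Finite α]

lemma IsBasis'.mrank_eq_ncard (hI : M.IsBasis' I X) : M.mrank X = I.ncard := by
  have hle : ∀ n ∈ {n | ∃ J, M.Indep J ∧ J ⊆ X ∧ J.ncard = n}, n ≤ I.ncard := by
    rintro _ ⟨J, hJ, hJX, rfl⟩
    have hJI := hJ.encard_le_eRk_of_subset hJX
    rwa [← hI.encard_eq_eRk, ← J.toFinite.cast_ncard_eq, ← I.toFinite.cast_ncard_eq,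
      Nat.cast_le] at hJI
  exact le_antisymm (csSup_le ⟨_, I, hI.indep, hI.subset, rfl⟩ hle)
    (le_csSup ⟨_, hle⟩ ⟨I, hI.indep, hI.subset, rfl⟩)

lemma IsBasis.mrank_eq_ncard (hI : M.IsBasis I X) : M.mrank X = I.ncard :=
  hI.isBasis'.mrank_eq_ncard

lemma mrank_mono (hXY : X ⊆ Y) : M.mrank X ≤ M.mrank Y := by
  obtain ⟨I, hI⟩ := M.exists_isBasis' X
  obtain ⟨J, hJ, hIJ⟩ := hI.indep.subset_isBasis'_of_subset (hI.subset.trans hXY)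
  rw [hI.mrank_eq_ncard, hJ.mrank_eq_ncard]
  exact Set.ncard_le_ncard hIJ

lemma mrank_le_ncard (M : Matroid α) (X : Set α) : M.mrank X ≤ X.ncard := by
  obtain ⟨I, hI⟩ := M.exists_isBasis' X
  rw [hI.mrank_eq_ncard]
  exact Set.ncard_le_ncard hI.subset

lemma IsNonloop.mrank_contractElem_add_one (he : M.IsNonloop e) (hX : X ⊆ M.E \ {e}) :
    (M ／ {e}).mrank X + 1 = M.mrank (insert e X) := by
  obtain ⟨J, hJ⟩ := (M ／ {e}).exists_isBasis X hX
  have hJe : e ∉ J := fun heJ => (hX (hJ.subset heJ)).2 rfl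
  rw [hJ.mrank_eq_ncard, ← Set.union_singleton,
    (he.indep.union_isBasis_union_of_contract_isBasis hJ).mrank_eq_ncard, Set.union_singleton,
    Set.ncard_insert_of_notMem hJe]

end

noncomputable def tutteTerm (M : Matroid α) (A : Finset α) : MvPolynomial (Fin 2) ℤ :=
  (X 0 - 1) ^ (M.mrank M.E - M.mrank A) * (X 1 - 1) ^ (A.card - M.mrank A)

lemma tutte_eq_sum_powerset [Fintype α] (M : Matroid α) :
    M.tutte = ∑ A ∈ M.E.toFinset.powerset, M.tutteTerm A := by
  rw [tutte]
  congr 1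
  ext A
  simp [Set.subset_toFinset]

structure IsParallelConnection (P M₁ M₂ : Matroid α) (e : α) : Prop where
  inter_ground : M₁.E ∩ M₂.E = {e}
  ground_eq : P.E = M₁.E ∪ M₂.E
  isCircuit_iff : ∀ C, P.IsCircuit C ↔ M₁.IsCircuit C ∨ M₂.IsCircuit C ∨
    ∃ C₁ C₂, M₁.IsCircuit C₁ ∧ M₂.IsCircuit C₂ ∧ e ∈ C₁ ∧ e ∈ C₂ ∧ C = C₁ \ {e} ∪ C₂ \ {e}

namespace IsParallelConnection

open Set

variable {P M₁ M₂ : Matroid α} {e : α} {I S B : Set α}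

lemma mem_ground_left (h : P.IsParallelConnection M₁ M₂ e) : e ∈ M₁.E :=
  (h.inter_ground.symm.subset rfl).1

lemma mem_ground_right (h : P.IsParallelConnection M₁ M₂ e) : e ∈ M₂.E :=
  (h.inter_ground.symm.subset rfl).2

lemma indep_iff (h : P.IsParallelConnection M₁ M₂ e) :
    P.Indep I ↔ I ⊆ P.E ∧ M₁.Indep (I ∩ M₁.E) ∧ M₂.Indep (I ∩ M₂.E) ∧
      (M₁.Indep (insert e (I ∩ M₁.E)) ∨ M₂.Indep (insert e (I ∩ M₂.E))) := by
  constructor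
  · intro hI
    have hpart {M : Matroid α} (hM : ∀ C, M.IsCircuit C → P.IsCircuit C) :
        M.Indep (I ∩ M.E) := by
      rw [indep_iff_forall_subset_not_isCircuit inter_subset_right]
      exact fun C hCI hC => (hM C hC).not_indep (hI.subset (hCI.trans inter_subset_left))
    have h₁ := hpart fun C hC => (h.isCircuit_iff C).2 (Or.inl hC)
    have h₂ := hpart fun C hC => (h.isCircuit_iff C).2 (Or.inr (Or.inl hC))
    refine ⟨hI.subset_ground, h₁, h₂, ?_⟩
    by_contra! hdep
    obtain ⟨C₁, hC₁I, hC₁, heC₁⟩ :=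
      h₁.exists_isCircuit_of_not_indep_insert h.mem_ground_left hdep.1
    obtain ⟨C₂, hC₂I, hC₂, heC₂⟩ :=
      h₂.exists_isCircuit_of_not_indep_insert h.mem_ground_right hdep.2
    refine ((h.isCircuit_iff _).2 (Or.inr (Or.inr ⟨C₁, C₂, hC₁, hC₂, heC₁, heC₂, rfl⟩))).not_indep
      (hI.subset (union_subset ?_ ?_)) <;>
    rw [sdiff_singleton_subset_iff]
    exacts [hC₁I.trans (insert_subset_insert inter_subset_left),
      hC₂I.trans (insert_subset_insert inter_subset_left)]
  · rintro ⟨hIE, h₁, h₂, h₁₂⟩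
    rw [indep_iff_forall_subset_not_isCircuit hIE]
    intro C hCI hC
    obtain hC | hC | ⟨C₁, C₂, hC₁, hC₂, -, -, rfl⟩ := (h.isCircuit_iff C).1 hC
    · exact hC.not_indep (h₁.subset (subset_inter hCI hC.subset_ground))
    · exact hC.not_indep (h₂.subset (subset_inter hCI hC.subset_ground))
    · have hdep {M : Matroid α} {C' : Set α} (hC' : M.IsCircuit C') (hC'I : C' \ {e} ⊆ I) :
          ¬ M.Indep (insert e (I ∩ M.E)) := fun hind => hC'.not_indep <| hind.subset <|
        sdiff_singleton_subset_iff.1 (subset_inter hC'I (sdiff_subset.trans hC'.subset_ground))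
      obtain ⟨hC₁I, hC₂I⟩ := union_subset_iff.1 hCI
      exact h₁₂.elim (hdep hC₁ hC₁I) (hdep hC₂ hC₂I)

lemma disjoint_sdiff_singleton_ground (h : P.IsParallelConnection M₁ M₂ e) :
    Disjoint (M₁.E \ {e}) M₂.E :=
  disjoint_left.2 fun _ hx hx₂ => hx.2 (h.inter_ground.subset ⟨hx.1, hx₂⟩)

lemma ground_eq_sdiff_union (h : P.IsParallelConnection M₁ M₂ e) :
    P.E = (M₁.E \ {e}) ∪ M₂.E := by
  rw [h.ground_eq]
  ext x
  grind [h.mem_ground_right]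

lemma union_subset_ground (h : P.IsParallelConnection M₁ M₂ e) (hS : S ⊆ M₁.E \ {e})
    (hB : B ⊆ M₂.E) : S ∪ B ⊆ P.E :=
  h.ground_eq ▸ union_subset_union (hS.trans sdiff_subset) hB

lemma indep_union_iff (h : P.IsParallelConnection M₁ M₂ e)
    (hM₁ : ∀ C, M₁.IsCircuit C ↔ C = M₁.E) (hS : S ⊆ M₁.E \ {e}) (hB : B ⊆ M₂.E) :
    P.Indep (S ∪ B) ↔ M₂.Indep B ∧ (M₁.E \ {e} ⊆ S → e ∉ B ∧ M₂.Indep (insert e B)) := by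
  have hmeet : ∀ x ∈ M₁.E, x ∈ M₂.E → x = e := fun x h₁ h₂ =>
    h.inter_ground.subset ⟨h₁, h₂⟩
  have he₁ := h.mem_ground_left
  have hSB : (S ∪ B) ∩ M₂.E = B := by ext x; grind
  have hE₁ : M₁.E ⊆ S ∪ B ↔ M₁.E \ {e} ⊆ S ∧ e ∈ B := by grind
  have hE₁' : M₁.E ⊆ insert e (S ∪ B) ↔ M₁.E \ {e} ⊆ S := by grind
  rw [h.indep_iff, indep_iff_ssubset_ground_of_isCircuit_iff hM₁,
    indep_iff_ssubset_ground_of_isCircuit_iff hM₁, hSB, ← insert_inter_of_mem he₁]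
  simp only [ssubset_def, inter_subset_right, subset_inter_iff, subset_refl, hE₁, hE₁',
    h.union_subset_ground hS hB, and_true, true_and]
  tauto

section Finite

variable [_root_.Finite α]

lemma mrank_union_of_ssubset (h : P.IsParallelConnection M₁ M₂ e)
    (hM₁ : ∀ C, M₁.IsCircuit C ↔ C = M₁.E) (hS : S ⊂ M₁.E \ {e}) (hB : B ⊆ M₂.E) :
    P.mrank (S ∪ B) = S.ncard + M₂.mrank B := by
  have hindep {J : Set α} (hJ : J ⊆ M₂.E) : P.Indep (S ∪ J) ↔ M₂.Indep J := by
    rw [h.indep_union_iff hM₁ hS.subset hJ]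
    exact and_iff_left fun hKS => (hS.not_subset hKS).elim
  obtain ⟨I, hI⟩ := M₂.exists_isBasis B hB
  have hbasis : P.IsBasis (S ∪ I) (S ∪ B) := by
    refine ((hindep hI.indep.subset_ground).2 hI.indep).isBasis_of_forall_insert
      (union_subset_union_right S hI.subset) fun x ⟨hxSB, hxSI⟩ => ?_
    have hxB : x ∈ B \ I := ⟨hxSB.resolve_left (fun hxS => hxSI (Or.inl hxS)),
      fun hxI => hxSI (Or.inr hxI)⟩
    have hxI : insert x I ⊆ M₂.E := insert_subset (hB hxB.1) hI.indep.subset_ground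
    rw [← union_insert]
    exact ⟨fun hind => (hI.insert_dep hxB).not_indep ((hindep hxI).1 hind),
      h.union_subset_ground hS.subset hxI⟩
  have hSI : Disjoint S I :=
    h.disjoint_sdiff_singleton_ground.mono hS.subset hI.indep.subset_ground
  rw [hbasis.mrank_eq_ncard, ncard_union_eq hSI, hI.mrank_eq_ncard]

lemma mrank_sdiff_singleton_union_add_one (h : P.IsParallelConnection M₁ M₂ e)
    (hM₁ : ∀ C, M₁.IsCircuit C ↔ C = M₁.E) (he : M₂.IsNonloop e) (hB : B ⊆ M₂.E) :
    P.mrank ((M₁.E \ {e}) ∪ B) + 1 = (M₁.E \ {e}).ncard + M₂.mrank (insert e B) := by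
  set K := M₁.E \ {e}
  obtain ⟨I, hI, heI⟩ := he.indep.subset_isBasis_of_subset
    (singleton_subset_iff.2 (mem_insert e B)) (insert_subset he.mem_ground hB)
  rw [singleton_subset_iff] at heI
  have hIB : I \ {e} ⊆ B := sdiff_singleton_subset_iff.2 hI.subset
  have hbasis : P.IsBasis (K ∪ (I \ {e})) (K ∪ B) := by
    have hind := (h.indep_union_iff hM₁ subset_rfl (hIB.trans hB)).2
      ⟨hI.indep.subset sdiff_subset, fun _ => ⟨fun he => he.2 rfl,
        by rw [insert_sdiff_singleton, insert_eq_of_mem heI]; exact hI.indep⟩⟩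
    refine hind.isBasis_of_forall_insert (union_subset_union_right K hIB)
      fun x ⟨hxKB, hxJ⟩ => ?_
    have hxB : x ∈ B := hxKB.resolve_left fun hxK => hxJ (Or.inl hxK)
    have hxIB : insert x (I \ {e}) ⊆ M₂.E := insert_subset (hB hxB) (hIB.trans hB)
    rw [← union_insert]
    refine ⟨fun hind' => ?_, h.union_subset_ground subset_rfl hxIB⟩
    obtain ⟨hexI, hins⟩ := ((h.indep_union_iff hM₁ subset_rfl hxIB).1 hind').2 subset_rfl
    have hxe : x ≠ e := fun hxe => hexI (hxe ▸ mem_insert x _)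
    have hxI : x ∉ I := fun hxI => hxJ (Or.inr ⟨hxI, hxe⟩)
    refine (hI.insert_dep ⟨mem_insert_of_mem e hxB, hxI⟩).not_indep ?_
    rwa [insert_comm, insert_sdiff_singleton, insert_eq_of_mem heI] at hins
  have hKI : Disjoint K (I \ {e}) := h.disjoint_sdiff_singleton_ground.mono_right (hIB.trans hB)
  rw [hbasis.mrank_eq_ncard, ncard_union_eq hKI, add_assoc, ncard_sdiff_singleton_add_one heI,
    hI.mrank_eq_ncard]

lemma mrank_ground_add_one (h : P.IsParallelConnection M₁ M₂ e)
    (hM₁ : ∀ C, M₁.IsCircuit C ↔ C = M₁.E) (he : M₂.IsNonloop e) :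
    P.mrank P.E + 1 = (M₁.E \ {e}).ncard + M₂.mrank M₂.E := by
  have := h.mrank_sdiff_singleton_union_add_one hM₁ he subset_rfl
  rwa [insert_eq_of_mem he.mem_ground, ← h.ground_eq_sdiff_union] at this

end Finite

section Fintype

open scoped Finset

variable [Fintype α]

lemma tutteTerm_union_of_ssubset (h : P.IsParallelConnection M₁ M₂ e)
    (hM₁ : ∀ C, M₁.IsCircuit C ↔ C = M₁.E) (he : M₂.IsNonloop e) {K S B : Finset α}
    (hK : (K : Set α) = M₁.E \ {e}) (hS : S ⊂ K) (hB : (B : Set α) ⊆ M₂.E) :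
    P.tutteTerm (S ∪ B) = (X 0 - 1) ^ (#K - 1 - #S) * M₂.tutteTerm B := by
  have hSK : (S : Set α) ⊂ M₁.E \ {e} := hK ▸ Finset.coe_ssubset.2 hS
  have hrk := h.mrank_union_of_ssubset hM₁ hSK hB
  have hrE := h.mrank_ground_add_one hM₁ he
  rw [← hK, ncard_coe_finset] at hrE
  have hcard : #(S ∪ B) = #S + #B := Finset.card_union_of_disjoint <|
    Finset.disjoint_coe.1 (h.disjoint_sdiff_singleton_ground.mono hSK.subset hB)
  have hSlt : #S < #K := Finset.card_lt_card hS
  have hBE : M₂.mrank B ≤ M₂.mrank M₂.E := mrank_mono hB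
  rw [tutteTerm, tutteTerm, Finset.coe_union, hrk, hcard, ncard_coe_finset,
    show P.mrank P.E - (#S + M₂.mrank B) = (#K - 1 - #S) + (M₂.mrank M₂.E - M₂.mrank B) by omega,
    show #S + #B - (#S + M₂.mrank B) = #B - M₂.mrank B by omega, pow_add, mul_assoc]

lemma tutteTerm_union_add_tutteTerm_union_insert (h : P.IsParallelConnection M₁ M₂ e)
    (hM₁ : ∀ C, M₁.IsCircuit C ↔ C = M₁.E) (he : M₂.IsNonloop e) {K B : Finset α}
    (hK : (K : Set α) = M₁.E \ {e}) (hB : (B : Set α) ⊆ M₂.E \ {e}) :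
    P.tutteTerm (K ∪ B) + P.tutteTerm (K ∪ insert e B) = X 1 * (M₂ ／ {e}).tutteTerm B := by
  set ρ := M₂.mrank (insert e (B : Set α))
  have hB₂ : (B : Set α) ⊆ M₂.E := hB.trans sdiff_subset
  have heB : e ∉ B := fun heB => (hB heB).2 rfl
  have hKB : Disjoint K B :=
    Finset.disjoint_coe.1 (hK ▸ h.disjoint_sdiff_singleton_ground.mono_right hB₂)
  have hKeB : Disjoint K (insert e B) := Finset.disjoint_coe.1 <| hK ▸
    h.disjoint_sdiff_singleton_ground.mono_right (by simpa using insert_subset he.mem_ground hB₂)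
  have hr₁ : P.mrank ↑(K ∪ B) + 1 = #K + ρ := by
    rw [Finset.coe_union, hK, h.mrank_sdiff_singleton_union_add_one hM₁ he hB₂, ← hK,
      ncard_coe_finset]
  have hr₂ : P.mrank ↑(K ∪ insert e B) + 1 = #K + ρ := by
    rw [Finset.coe_union, Finset.coe_insert, hK, h.mrank_sdiff_singleton_union_add_one hM₁ he
      (insert_subset he.mem_ground hB₂), insert_idem, ← hK, ncard_coe_finset]
  have hrE := h.mrank_ground_add_one hM₁ he
  rw [← hK, ncard_coe_finset] at hrE
  have hc : (M₂ ／ {e}).mrank B + 1 = ρ := he.mrank_contractElem_add_one hB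
  have hcE : (M₂ ／ {e}).mrank (M₂ ／ {e}).E + 1 = M₂.mrank M₂.E := by
    rw [he.mrank_contractElem_add_one (contract_ground M₂ {e}).subset, contract_ground,
      insert_sdiff_singleton, insert_eq_of_mem he.mem_ground]
  have hρ : ρ ≤ #B + 1 := (mrank_le_ncard _ _).trans <| by
    simpa using ncard_insert_le e (B : Set α)
  rw [tutteTerm, tutteTerm, tutteTerm, Finset.card_union_of_disjoint hKB,
    Finset.card_union_of_disjoint hKeB, Finset.card_insert_of_notMem heB,
    show P.mrank P.E - P.mrank ↑(K ∪ B) = M₂.mrank M₂.E - ρ by omega,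
    show P.mrank P.E - P.mrank ↑(K ∪ insert e B) = M₂.mrank M₂.E - ρ by omega,
    show (M₂ ／ {e}).mrank (M₂ ／ {e}).E - (M₂ ／ {e}).mrank B = M₂.mrank M₂.E - ρ by omega,
    show #K + #B - P.mrank ↑(K ∪ B) = #B + 1 - ρ by omega,
    show #K + (#B + 1) - P.mrank ↑(K ∪ insert e B) = #B + 1 - ρ + 1 by omega,
    show #B - (M₂ ／ {e}).mrank B = #B + 1 - ρ by omega]
  ring

theorem tutte_eq (h : P.IsParallelConnection M₁ M₂ e) (hM₁ : ∀ C, M₁.IsCircuit C ↔ C = M₁.E)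
    (he : M₂.IsNonloop e) :
    P.tutte = (∑ i ∈ Finset.range (M₁.E \ {e}).ncard, X 0 ^ i) * M₂.tutte +
      X 1 * (M₂ ／ {e}).tutte := by
  set K := (M₁.E \ {e}).toFinset
  set E := M₂.E.toFinset
  have hK : (K : Set α) = M₁.E \ {e} := coe_toFinset _
  have hKE : Disjoint K E := disjoint_toFinset.2 h.disjoint_sdiff_singleton_ground
  have hP : P.E.toFinset = K ∪ E := by rw [h.ground_eq_sdiff_union, toFinset_union]
  have hE : E = insert e (E.erase e) := (Finset.insert_erase (mem_toFinset.2 he.mem_ground)).symm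
  have hC : (M₂ ／ {e}).E.toFinset = E.erase e := by
    rw [contract_ground, toFinset_sdiff, toFinset_singleton, Finset.sdiff_singleton_eq_erase]
  have hX : (X 0 : MvPolynomial (Fin 2) ℤ) ≠ 1 := fun h0 => by
    simpa using congrArg (MvPolynomial.eval 0) h0
  rw [tutte_eq_sum_powerset P, hP, Finset.sum_powerset_union_of_disjoint hKE,
    ← Finset.sum_erase_add _ _ (Finset.mem_powerset_self K), ncard_eq_toFinset_card',
    ← Finset.sum_powerset_erase_self_sub_one_pow hX, Finset.sum_mul,
    tutte_eq_sum_powerset M₂, tutte_eq_sum_powerset (M₂ ／ {e}), hC, Finset.mul_sum]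
  congr 1
  · refine Finset.sum_congr rfl fun S hS => ?_
    rw [Finset.mul_sum]
    refine Finset.sum_congr rfl fun B hB => h.tutteTerm_union_of_ssubset hM₁ he hK ?_ ?_
    · exact Finset.ssubset_iff_subset_ne.2 ⟨Finset.mem_powerset.1 (Finset.mem_of_mem_erase hS),
        Finset.ne_of_mem_erase hS⟩
    · simpa [E] using Finset.mem_powerset.1 hB
  · conv_lhs => rw [hE, Finset.sum_powerset_insert (Finset.notMem_erase e E),
      ← Finset.sum_add_distrib]
    refine Finset.sum_congr rfl fun B hB => ?_
    refine h.tutteTerm_union_add_tutteTerm_union_insert hM₁ he hK ?_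
    simpa [E, ← Finset.coe_subset] using Finset.mem_powerset.1 hB

end Fintype

end IsParallelConnection

end Matroid

theorem tutte_parallelConnection_general [Fintype α] (n : ℕ) (M₀ Cn P : Matroid α)
    (hsimple : M₀.IsSimple) (ε₀ : α)
    (hCncirc : ∀ C, Cn.IsCircuit' C ↔ C = Cn.E) (hCncard : Cn.E.ncard = n)
    (hmeet : Cn.E ∩ M₀.E = {ε₀})
    (hPE : P.E = Cn.E ∪ M₀.E)
    (hPcirc : ∀ C, P.IsCircuit' C ↔ (Cn.IsCircuit' C ∨ M₀.IsCircuit' C ∨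
      ∃ C₁ C₂, Cn.IsCircuit' C₁ ∧ M₀.IsCircuit' C₂ ∧ ε₀ ∈ C₁ ∧ ε₀ ∈ C₂ ∧
        C = (C₁ \ {ε₀}) ∪ (C₂ \ {ε₀}))) :
    P.tutte = (∑ i ∈ Finset.range (n - 1), X 0 ^ i) * M₀.tutte +
      X 1 * (M₀.con {ε₀}).tutte := by
  simp only [Matroid.isCircuit'_iff] at hCncirc hPcirc
  have h : P.IsParallelConnection Cn M₀ ε₀ := ⟨hmeet, hPE, hPcirc⟩
  have hε₀ : M₀.IsNonloop ε₀ := Matroid.indep_singleton.1 <|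
    hsimple _ (Set.singleton_subset_iff.2 h.mem_ground_right) (by simp)
  have hK : (Cn.E \ {ε₀}).ncard = n - 1 := by
    rw [Set.ncard_sdiff_singleton_of_mem h.mem_ground_left, hCncard]
  rw [h.tutte_eq hCncirc hε₀, hK, Matroid.con_eq_contract]

/-- The Tutte polynomial of the parallel connection `P = P(C_n, M₀)` of the `n`-cycle
matroid `Cn` with a simple matroid `M₀` along `ε₀`:
`T_P = (Σ_{i=0}^{n-2} x^i)·T_{M₀} + y·T_{M₀/ε₀}`. -/
theorem tutte_parallelConnection [Fintype α] (n : ℕ) (hn : 2 ≤ n) (M₀ Cn P : Matroid α)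
    (hsimple : M₀.IsSimple) (ε₀ : α) (hε : ε₀ ∈ M₀.E)
    (hCncirc : ∀ C, Cn.IsCircuit' C ↔ C = Cn.E) (hCncard : Cn.E.ncard = n)
    (hmeet : Cn.E ∩ M₀.E = {ε₀})
    (hPE : P.E = Cn.E ∪ M₀.E)
    (hPcirc : ∀ C, P.IsCircuit' C ↔ (Cn.IsCircuit' C ∨ M₀.IsCircuit' C ∨
      ∃ C₁ C₂, Cn.IsCircuit' C₁ ∧ M₀.IsCircuit' C₂ ∧ ε₀ ∈ C₁ ∧ ε₀ ∈ C₂ ∧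
        C = (C₁ \ {ε₀}) ∪ (C₂ \ {ε₀}))) :
    P.tutte = (∑ i ∈ Finset.range (n - 1), X 0 ^ i) * M₀.tutte +
      X 1 * (M₀.con {ε₀}).tutte :=
  tutte_parallelConnection_general n M₀ Cn P hsimple ε₀ hCncirc hCncard hmeet hPE hPcirc
end

section
/- Let A_0, A_1 be central arrangements in ℂ^{r_0}, ℂ^{r_1} both containing the hyperplane x_1 = 0 (after a change of coordinates), with Q(A_0) = x_1 Q̂_0 and Q(A_1) = x_1 Q̂_1, and let P(A_0, A_1) be the central arrangement in ℂ^{r_0+r_1-1} with defining polynomial Q_0(x_1,...,x_{r_0}) · Q̂_1(x_1, y_2,...,y_{r_1}). Let S be the arrangement {0} in ℂ^1. Then the complements C(A_0 ⊕ A_1) and C(S ⊕ P(A_0,A_1)) are homeomorphic; indeed both are homeomorphic to ℂ* × ℂ* × C(dA_0) × C(dA_1). -/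
/-!
Since `x₁ = 0` belongs to both arrangements, `x₁` is invertible on their complements, and the
shear `(x₁, y) ↦ (x₁, y / x₁)` identifies `C(A)` with `ℂ* × C(dA)` (the deconing lemma). The
same shear, with `x₁` read from the first factor, decouples `C(P(A₀, A₁))` into
`C(A₀) × C(dA₁)`. Coning both factors then shows that `C(A₀ ⊕ A₁)` and `C(S ⊕ P(A₀, A₁))` are
each homeomorphic to `ℂ* × ℂ* × C(dA₀) × C(dA₁)`.
-/

open LinearMap

namespace HyperplaneArrangement

variable {K : Type*} [Field K] {r r₀ r₁ : ℕ}

def complement {V : Type*} [AddCommGroup V] [Module K V] (A : Finset (V →ₗ[K] K)) : Set V :=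
  {p | ∀ f ∈ A, f p ≠ 0}

def deconeComplement (A : Finset ((Fin (r + 1) → K) →ₗ[K] K)) : Set (Fin r → K) :=
  {x | ∀ f ∈ A, f ≠ proj 0 → f (Fin.cons 1 x) ≠ 0}

/-- The forms of `A₁` act on `(x 0, y)`: the two first coordinates are identified. -/
def parallelComplement (A₀ : Finset ((Fin (r₀ + 1) → K) →ₗ[K] K))
    (A₁ : Finset ((Fin (r₁ + 1) → K) →ₗ[K] K)) : Set ((Fin (r₀ + 1) → K) × (Fin r₁ → K)) :=
  {w | w.1 ∈ complement A₀ ∧ ∀ g ∈ A₁, g ≠ proj 0 → g (Fin.cons (w.1 0) w.2) ≠ 0}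

lemma map_cons_eq_mul_map_cons_one (f : (Fin (r + 1) → K) →ₗ[K] K) {c : K} (hc : c ≠ 0)
    (y : Fin r → K) : f (Fin.cons c y) = c * f (Fin.cons 1 (c⁻¹ • y)) := by
  have : (Fin.cons c y : Fin (r + 1) → K) = c • Fin.cons 1 (c⁻¹ • y) := by
    ext i
    refine Fin.cases ?_ (fun j => ?_) i <;> simp [hc]
  rw [this, map_smul, smul_eq_mul]

lemma forall_map_cons_ne_zero_iff (A : Finset ((Fin (r + 1) → K) →ₗ[K] K)) {c : K} (hc : c ≠ 0)
    (y : Fin r → K) :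
    (∀ g ∈ A, g ≠ proj 0 → g (Fin.cons c y) ≠ 0) ↔ c⁻¹ • y ∈ deconeComplement A := by
  simp only [deconeComplement, Set.mem_ofPred_eq, map_cons_eq_mul_map_cons_one _ hc,
    mul_ne_zero_iff_left hc]

lemma mem_complement_iff_of_proj_mem {A : Finset ((Fin (r + 1) → K) →ₗ[K] K)}
    (hπ : proj 0 ∈ A) (p : Fin (r + 1) → K) :
    p ∈ complement A ↔ p 0 ≠ 0 ∧ ∀ g ∈ A, g ≠ proj 0 → g p ≠ 0 := by
  refine ⟨fun hp => ⟨hp _ hπ, fun g hg _ => hp g hg⟩, fun ⟨h0, hp⟩ g hg => ?_⟩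
  rcases eq_or_ne g (proj 0) with rfl | hne
  exacts [h0, hp g hg hne]

variable [TopologicalSpace K] [IsTopologicalDivisionRing K]

def shearHomeo {X : Type*} [TopologicalSpace X] (s : Set X) {c : X → K} (hc : Continuous c)
    (hs : ∀ x ∈ s, c x ≠ 0) (A : Finset ((Fin (r + 1) → K) →ₗ[K] K)) :
    {w : X × (Fin r → K) | w.1 ∈ s ∧ ∀ g ∈ A, g ≠ proj 0 → g (Fin.cons (c w.1) w.2) ≠ 0} ≃ₜ
      s × deconeComplement A where
  toFun w := (⟨w.1.1, w.2.1⟩,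
    ⟨(c w.1.1)⁻¹ • w.1.2, (forall_map_cons_ne_zero_iff A (hs _ w.2.1) _).1 w.2.2⟩)
  invFun v := ⟨(v.1, c v.1 • v.2), v.1.2, (forall_map_cons_ne_zero_iff A (hs _ v.1.2) _).2 <| by
    rw [inv_smul_smul₀ (hs _ v.1.2)]
    exact v.2.2⟩
  left_inv w := Subtype.ext <| Prod.ext rfl <| smul_inv_smul₀ (hs _ w.2.1) _
  right_inv v := Prod.ext rfl <| Subtype.ext <| inv_smul_smul₀ (hs _ v.1.2) _
  continuous_toFun := by
    refine .prodMk (.subtype_mk continuous_subtype_val.fst _) (.subtype_mk ?_ _)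
    exact ((hc.comp continuous_subtype_val.fst).inv₀ fun w => hs _ w.2.1).smul
      continuous_subtype_val.snd
  continuous_invFun := by
    have hx : Continuous fun v : s × deconeComplement A => (v.1 : X) :=
      continuous_subtype_val.comp continuous_fst
    exact .subtype_mk (hx.prodMk ((hc.comp hx).smul (continuous_subtype_val.comp continuous_snd))) _

def complementHomeoProdDecone (A : Finset ((Fin (r + 1) → K) →ₗ[K] K)) (hπ : proj 0 ∈ A) :
    complement A ≃ₜ {c : K | c ≠ 0} × deconeComplement A :=
  ((Fin.consEquivL K fun _ => K).toHomeomorph.symm.subtype fun p => by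
      simp [mem_complement_iff_of_proj_mem hπ]).trans
    (shearHomeo {c : K | c ≠ 0} continuous_id (fun _ hc => hc) A)

variable (A₀ : Finset ((Fin (r₀ + 1) → K) →ₗ[K] K))
  (A₁ : Finset ((Fin (r₁ + 1) → K) →ₗ[K] K))

def parallelComplementHomeo (hπ₀ : proj 0 ∈ A₀) :
    parallelComplement A₀ A₁ ≃ₜ complement A₀ × deconeComplement A₁ :=
  shearHomeo (complement A₀) (continuous_apply 0) (fun _ hx => hx _ hπ₀) A₁

def prodComplementHomeo (hπ₀ : proj 0 ∈ A₀) (hπ₁ : proj 0 ∈ A₁) :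
    ↥(complement A₀ ×ˢ complement A₁) ≃ₜ
      {c : K | c ≠ 0} × {c : K | c ≠ 0} × deconeComplement A₀ × deconeComplement A₁ :=
  (Homeomorph.Set.prod _ _).trans <|
    ((complementHomeoProdDecone A₀ hπ₀).prodCongr (complementHomeoProdDecone A₁ hπ₁)).trans <|
      (Homeomorph.prodProdProdComm _ _ _ _).trans (Homeomorph.prodAssoc _ _ _)

def parallelConnectionComplementHomeo (hπ₀ : proj 0 ∈ A₀) :
    ↥({c : K | c ≠ 0} ×ˢ parallelComplement A₀ A₁) ≃ₜ
      {c : K | c ≠ 0} × {c : K | c ≠ 0} × deconeComplement A₀ × deconeComplement A₁ :=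
  (Homeomorph.Set.prod _ _).trans <| (Homeomorph.refl _).prodCongr <|
    (parallelComplementHomeo A₀ A₁ hπ₀).trans <|
      ((complementHomeoProdDecone A₀ hπ₀).prodCongr (Homeomorph.refl _)).trans
        (Homeomorph.prodAssoc _ _ _)

end HyperplaneArrangement

theorem parallel_connection_homeomorph_general (r₀ r₁ : ℕ)
    (A₀ : Finset ((Fin (r₀ + 1) → ℂ) →ₗ[ℂ] ℂ)) (A₁ : Finset ((Fin (r₁ + 1) → ℂ) →ₗ[ℂ] ℂ))
    (hπ₀ : (LinearMap.proj 0 : (Fin (r₀ + 1) → ℂ) →ₗ[ℂ] ℂ) ∈ A₀)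
    (hπ₁ : (LinearMap.proj 0 : (Fin (r₁ + 1) → ℂ) →ₗ[ℂ] ℂ) ∈ A₁) :
    Nonempty
      ({p : (Fin (r₀ + 1) → ℂ) × (Fin (r₁ + 1) → ℂ) |
          (∀ f ∈ A₀, f p.1 ≠ 0) ∧ ∀ g ∈ A₁, g p.2 ≠ 0} ≃ₜ
        {q : ℂ × ((Fin (r₀ + 1) → ℂ) × (Fin r₁ → ℂ)) |
          q.1 ≠ 0 ∧ (∀ f ∈ A₀, f q.2.1 ≠ 0) ∧
            ∀ g ∈ A₁, g ≠ (LinearMap.proj 0 : (Fin (r₁ + 1) → ℂ) →ₗ[ℂ] ℂ) →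
              g (Fin.cons (q.2.1 0) q.2.2) ≠ 0}) ∧
    Nonempty
      ({p : (Fin (r₀ + 1) → ℂ) × (Fin (r₁ + 1) → ℂ) |
          (∀ f ∈ A₀, f p.1 ≠ 0) ∧ ∀ g ∈ A₁, g p.2 ≠ 0} ≃ₜ
        ({z : ℂ | z ≠ 0} × {z : ℂ | z ≠ 0} ×
          {x : Fin r₀ → ℂ | ∀ f ∈ A₀,
            f ≠ (LinearMap.proj 0 : (Fin (r₀ + 1) → ℂ) →ₗ[ℂ] ℂ) → f (Fin.cons 1 x) ≠ 0} ×
          {y : Fin r₁ → ℂ | ∀ g ∈ A₁,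
            g ≠ (LinearMap.proj 0 : (Fin (r₁ + 1) → ℂ) →ₗ[ℂ] ℂ) → g (Fin.cons 1 y) ≠ 0})) :=
  -- the two sets of the statement unfold to `complement A₀ ×ˢ complement A₁`
  -- and `{c | c ≠ 0} ×ˢ parallelComplement A₀ A₁`
  let e := HyperplaneArrangement.prodComplementHomeo A₀ A₁ hπ₀ hπ₁
  ⟨⟨e.trans (HyperplaneArrangement.parallelConnectionComplementHomeo A₀ A₁ hπ₀).symm⟩, ⟨e⟩⟩

/-- Let `A₀`, `A₁` be central arrangements (finite sets of nonzero linear forms) on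
`ℂ^(r₀+1)` and `ℂ^(r₁+1)` both containing the coordinate hyperplane `x₁ = 0` (the form
`proj 0`). Then the complement of `A₀ ⊕ A₁` is homeomorphic to the complement of
`S ⊕ P(A₀, A₁)`, where `P(A₀, A₁)` is the parallel connection (defined by the forms of
`A₀` in the variables `x` together with the forms of `A₁ \ {proj 0}` in the variables
`(x 0, y)`), and `S` is the arrangement `{0}` in `ℂ`; moreover both are homeomorphic to
`ℂ* × ℂ* × C(dA₀) × C(dA₁)`. -/
theorem parallel_connection_homeomorph (r₀ r₁ : ℕ)
    (A₀ : Finset ((Fin (r₀ + 1) → ℂ) →ₗ[ℂ] ℂ)) (A₁ : Finset ((Fin (r₁ + 1) → ℂ) →ₗ[ℂ] ℂ))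
    (hA₀ : ∀ f ∈ A₀, f ≠ 0) (hA₁ : ∀ g ∈ A₁, g ≠ 0)
    (hπ₀ : (LinearMap.proj 0 : (Fin (r₀ + 1) → ℂ) →ₗ[ℂ] ℂ) ∈ A₀)
    (hπ₁ : (LinearMap.proj 0 : (Fin (r₁ + 1) → ℂ) →ₗ[ℂ] ℂ) ∈ A₁) :
    Nonempty
      ({p : (Fin (r₀ + 1) → ℂ) × (Fin (r₁ + 1) → ℂ) |
          (∀ f ∈ A₀, f p.1 ≠ 0) ∧ ∀ g ∈ A₁, g p.2 ≠ 0} ≃ₜ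
        {q : ℂ × ((Fin (r₀ + 1) → ℂ) × (Fin r₁ → ℂ)) |
          q.1 ≠ 0 ∧ (∀ f ∈ A₀, f q.2.1 ≠ 0) ∧
            ∀ g ∈ A₁, g ≠ (LinearMap.proj 0 : (Fin (r₁ + 1) → ℂ) →ₗ[ℂ] ℂ) →
              g (Fin.cons (q.2.1 0) q.2.2) ≠ 0}) ∧
    Nonempty
      ({p : (Fin (r₀ + 1) → ℂ) × (Fin (r₁ + 1) → ℂ) |
          (∀ f ∈ A₀, f p.1 ≠ 0) ∧ ∀ g ∈ A₁, g p.2 ≠ 0} ≃ₜ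
        ({z : ℂ | z ≠ 0} × {z : ℂ | z ≠ 0} ×
          {x : Fin r₀ → ℂ | ∀ f ∈ A₀,
            f ≠ (LinearMap.proj 0 : (Fin (r₀ + 1) → ℂ) →ₗ[ℂ] ℂ) → f (Fin.cons 1 x) ≠ 0} ×
          {y : Fin r₁ → ℂ | ∀ g ∈ A₁,
            g ≠ (LinearMap.proj 0 : (Fin (r₁ + 1) → ℂ) →ₗ[ℂ] ℂ) → g (Fin.cons 1 y) ≠ 0})) :=
  parallel_connection_homeomorph_general r₀ r₁ A₀ A₁ hπ₀ hπ₁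
end

section
/- For n ≥ 3, the image under φ̂ of ∂(e_1⋯e_n) equals ∂(ē_1⋯ē_n), where φ̂ is the exterior-algebra map sending e_i ↦ ē_i − ē_n + e_p for 1 ≤ i ≤ n−1 and e_n ↦ e_p. -/
/-!
Expanding along the first factor gives `∂(x₀x₁⋯xₙ) = x₁⋯xₙ - x₀ ∂(x₁⋯xₙ)`, and since
`x₁ ∂(x₁⋯xₙ) = x₁⋯xₙ` when `x₁² = 0`, this becomes `∂(x₀x₁⋯xₙ) = -(x₀ - x₁) ∂(x₁⋯xₙ)`. Hence
`∂(x₀⋯xₙ) = (-1)ⁿ (x₀ - x₁)⋯(xₙ₋₁ - xₙ)`, so a ring map respects `∂` as soon as it maps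
consecutive differences to consecutive differences. For `φ̂` this holds because the shift
`-ē_n + e_p` cancels in `φ̂(e_i - e_{i+1})`.
-/

section Boundary

variable {A : Type*} [Ring A]

/-- `∂(x₀⋯xₙ₋₁) = ∑ᵢ (-1)ⁱ x₀⋯x̂ᵢ⋯xₙ₋₁`. -/
def boundary {n : ℕ} (x : Fin n → A) : A :=
  ∑ i : Fin n, (-1 : A) ^ (i : ℕ) * ((List.ofFn x).eraseIdx i).prod

theorem boundary_succ {n : ℕ} (x : Fin (n + 1) → A) :
    boundary x = (List.ofFn fun i => x i.succ).prod - x 0 * boundary fun i => x i.succ := by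
  rw [boundary, boundary, Fin.sum_univ_succ, List.ofFn_succ, Finset.mul_sum,
    sub_eq_add_neg, ← Finset.sum_neg_distrib]
  congr 1
  · simp
  · refine Finset.sum_congr rfl fun i _ => ?_
    rw [Fin.val_succ, List.eraseIdx_cons_succ, List.prod_cons, pow_succ, mul_neg_one, neg_mul,
      ((Commute.neg_one_left (x 0)).pow_left i).left_comm]

theorem boundary_succ_succ {n : ℕ} (x : Fin (n + 2) → A) (hx : x 1 * x 1 = 0) :
    boundary x = -((x 0 - x 1) * boundary fun i => x i.succ) := by
  have hmul : (x 1 * boundary fun i => x i.succ) = (List.ofFn fun i => x i.succ).prod := by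
    rw [boundary_succ, Fin.succ_zero_eq_one, mul_sub, ← mul_assoc, hx, zero_mul, sub_zero,
      List.ofFn_succ, List.prod_cons]
    rfl
  rw [boundary_succ x, sub_mul, hmul]
  abel

theorem boundary_eq_neg_one_pow_mul_prod_sub {n : ℕ} (x : Fin (n + 1) → A)
    (hx : ∀ i, x i * x i = 0) :
    boundary x = (-1 : A) ^ n * (List.ofFn fun i : Fin n => x i.castSucc - x i.succ).prod := by
  induction n with
  | zero => simp [boundary]
  | succ n ih =>
    rw [boundary_succ_succ x (hx 1), ih _ fun i => hx i.succ, List.ofFn_succ, List.prod_cons,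
      pow_succ, mul_neg_one, neg_mul, ← mul_assoc, ← ((Commute.neg_one_left _).pow_left n).eq,
      mul_assoc]
    simp only [Fin.succ_castSucc, Fin.castSucc_zero, Fin.succ_zero_eq_one]

theorem map_boundary_of_map_sub {B F : Type*} [Ring B] [FunLike F A B] [RingHomClass F A B]
    (f : F) {n : ℕ} (x : Fin (n + 1) → A) (y : Fin (n + 1) → B)
    (hx : ∀ i, x i * x i = 0) (hy : ∀ i, y i * y i = 0)
    (hf : ∀ i : Fin n, f (x i.castSucc - x i.succ) = y i.castSucc - y i.succ) :
    f (boundary x) = boundary y := by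
  rw [boundary_eq_neg_one_pow_mul_prod_sub x hx, boundary_eq_neg_one_pow_mul_prod_sub y hy,
    map_mul, map_pow, map_neg, map_one, map_list_prod, List.map_ofFn]
  simp only [Function.comp_def, hf]

end Boundary

/-- For `n ≥ 3`, if an algebra homomorphism `φ` of exterior algebras sends
`e i ↦ ē i - ē n + e p` for `1 ≤ i ≤ n - 1` and `e n ↦ e p`, then
`φ(∂(e 1 ⋯ e n)) = ∂(ē 1 ⋯ ē n)`. -/
theorem phi_boundary (R M M' : Type*) [CommRing R] [AddCommGroup M] [Module R M]
    [AddCommGroup M'] [Module R M'] (n : ℕ) (hn : 3 ≤ n)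
    (φ : ExteriorAlgebra R M →ₐ[R] ExteriorAlgebra R M')
    (v : Fin n → M) (w : Fin n → M') (p : M')
    (hφ : ∀ i : Fin n, (i : ℕ) < n - 1 →
      φ (ExteriorAlgebra.ι R (v i)) =
        ExteriorAlgebra.ι R (w i) - ExteriorAlgebra.ι R (w ⟨n - 1, by omega⟩) +
          ExteriorAlgebra.ι R p)
    (hφn : φ (ExteriorAlgebra.ι R (v ⟨n - 1, by omega⟩)) = ExteriorAlgebra.ι R p) :
    φ (∑ i : Fin n, ((-1 : ExteriorAlgebra R M) ^ (i : ℕ)) *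
        ((List.ofFn fun j : Fin n => ExteriorAlgebra.ι R (v j)).eraseIdx i).prod) =
      ∑ i : Fin n, ((-1 : ExteriorAlgebra R M') ^ (i : ℕ)) *
        ((List.ofFn fun j : Fin n => ExteriorAlgebra.ι R (w j)).eraseIdx i).prod := by
  obtain ⟨m, rfl⟩ : ∃ m, n = m + 1 := ⟨n - 1, by omega⟩
  refine map_boundary_of_map_sub φ _ _ (fun _ => ExteriorAlgebra.ι_sq_zero _)
    (fun _ => ExteriorAlgebra.ι_sq_zero _) fun i => ?_
  rw [map_sub, hφ i.castSucc (by simp)]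
  rcases (Nat.succ_le_of_lt i.isLt).lt_or_eq with hinner | hlast
  · rw [hφ i.succ (by simp; omega)]
    abel
  · have hsucc : i.succ = ⟨m + 1 - 1, by omega⟩ := Fin.ext (by simp; omega)
    rw [hsucc, hφn]
    abel
end
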